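/- Assume 0<h<2. The zero-temperature dynamics has no cycles of length greater than two: there exist no n≥3 and pairwise distinct configurations σ_1,…,σ_n∈𝒮 such that σ_{i+1}=Tσ_i for all i=1,…,n−1 and σ_1=Tσ_n. -/

import Mathlib

open scoped BigOperators Classical
open Filter

namespace PCA

/-- Sites of the two-dimensional discrete torus of side `L`. -/
abbrev Site (L : ℕ) := ZMod L × ZMod L

/-- Spin configurations: `true` codes the spin `+1`, `false` codes `-1`. -/
abbrev Config (L : ℕ) := Site L → Bool

noncomputable section

/-- The real value of a spin. -/
def spin (b : Bool) : ℝ := if b then 1 else -1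

def east (L : ℕ) : Site L := (1, 0)
def north (L : ℕ) : Site L := (0, 1)

variable {L : ℕ}

/-- `S_σ(x)`: the sum of the spins of the four nearest neighbours of `x`. -/
def nnS (σ : Config L) (x : Site L) : ℝ :=
  spin (σ (x + east L)) + spin (σ (x - east L)) +
    spin (σ (x + north L)) + spin (σ (x - north L))

/-- Single-site heat-bath probability `p_x(a|σ)`. -/
def flipP (β h : ℝ) (σ : Config L) (x : Site L) (a : Bool) : ℝ :=
  1 / (1 + Real.exp (-2 * β * spin a * (nnS σ x + h)))

/-- The PCA transition matrix `P(σ,η) = ∏_x p_x(η(x)|σ)`. -/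
def Pmat (β h : ℝ) [NeZero L] (σ η : Config L) : ℝ :=
  ∏ x : Site L, flipP β h σ x (η x)

/-- The four-body Hamiltonian `H_β`. -/
def Ham (β h : ℝ) [NeZero L] (σ : Config L) : ℝ :=
  -(β * h) * ∑ x : Site L, spin (σ x)
    - ∑ x : Site L, Real.log (Real.cosh (β * (nnS σ x + h)))

/-- The zero-temperature energy `E`. -/
def En (h : ℝ) [NeZero L] (σ : Config L) : ℝ :=
  -h * ∑ x : Site L, spin (σ x) - ∑ x : Site L, |nnS σ x + h|

/-- The zero-temperature drift map `T`. -/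
def T (h : ℝ) (σ : Config L) : Config L :=
  fun x => if 0 < nnS σ x + h then true else false

def plusC (L : ℕ) : Config L := fun _ => true
def minusC (L : ℕ) : Config L := fun _ => false

/-- The even chessboard `C_e(x) = (-1)^(x₁+x₂)` (`true` at even-parity sites). -/
def chessE (L : ℕ) : Config L := fun x => decide ((x.1 + x.2).val % 2 = 0)
def chessO (L : ℕ) : Config L := fun x => !(chessE L x)
def chessSet (L : ℕ) : Set (Config L) := {chessE L, chessO L}

def IsChessCfg {L : ℕ} (C : Config L) : Prop := C = chessE L ∨ C = chessO L

/-- A trap: a stable configuration or an element of a stable pair. -/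
def IsTrap (h : ℝ) (σ : Config L) : Prop := T h σ = σ ∨ T h (T h σ) = σ

/-- The trap `σ̂` reached by the downhill path started at `σ`. -/
def hatTrap (h : ℝ) (σ : Config L) : Config L :=
  (T h)^[sInf {n | IsTrap h ((T h)^[n] σ)}] σ

/-- The basin of attraction `𝔅(ζ)` of a trap `ζ`. -/
def basin (h : ℝ) (ζ : Config L) : Set (Config L) := {σ | hatTrap h σ = ζ}

/-- The interior of a rectangle on the dual lattice: an `a × b` block of sites
with lower-left corner `c`. -/
def rect (c : Site L) (a b : ℕ) : Set (Site L) :=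
  { y | ∃ i j : ℕ, i < a ∧ j < b ∧ y = c + ((i : ZMod L), (j : ZMod L)) }

/-- The configuration equal to `ζ` inside the given rectangle and to `bg` outside. -/
def rectCfg (bg ζ : Config L) (c : Site L) (a b : ℕ) : Config L :=
  fun x => if x ∈ rect c a b then ζ x else bg x

/-- Differences between sites at euclidean distance at most `2` on the torus. -/
def closeDiff (d : Site L) : Prop :=
  ∃ u v : ℤ, u ^ 2 + v ^ 2 ≤ 4 ∧ d = ((u : ZMod L), (v : ZMod L))

/-- Two sets of sites are non-interacting iff all pairs of sites are at
euclidean distance `> 2` (equivalently `≥ √5`). -/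
def NonInteracting (A B : Set (Site L)) : Prop :=
  ∀ x ∈ A, ∀ y ∈ B, ¬ closeDiff (y - x)

/-- Nearest-neighbour adjacency on the torus. -/
def Adj (x y : Site L) : Prop :=
  y = x + east L ∨ y = x - east L ∨ y = x + north L ∨ y = x - north L

def stepSet : Set (ℤ × ℤ) := {(1, 0), (-1, 0), (0, 1), (0, -1)}

/-- `X` contains a nearest-neighbour loop winding around the torus
(a percolating, torus-wrapping, cluster is a cluster containing such a loop). -/
def Wrapping (X : Set (Site L)) : Prop :=
  ∃ (n : ℕ) (f : ℕ → Site L) (d : ℕ → ℤ × ℤ),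
    0 < n ∧ f n = f 0 ∧ (∑ i ∈ Finset.range n, d i) ≠ 0 ∧
    ∀ i < n, d i ∈ stepSet ∧
      f (i + 1) = f i + (((d i).1 : ZMod L), ((d i).2 : ZMod L)) ∧ f i ∈ X

/-- `σ` has a well defined sea of the homogeneous phase `α`. -/
def SeaHom (h : ℝ) (α σ : Config L) : Prop :=
  ∃ X : Set (Site L), Wrapping X ∧ (∀ x ∈ X, σ x = α x) ∧
    ∀ n : ℕ, 1 ≤ n → ∀ x ∈ X, (T h)^[n] σ x = α x

/-- `σ` has a well defined sea of the chessboard `C`. -/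
def SeaChess (h : ℝ) (C σ : Config L) : Prop :=
  ∃ X : Set (Site L), Wrapping X ∧ (∀ x ∈ X, σ x = C x) ∧
    ∀ n : ℕ, 1 ≤ n → ∀ x ∈ X, (T h)^[2 * n] σ x = C x

def SeaMinus (h : ℝ) (σ : Config L) : Prop := SeaHom h (minusC L) σ
def SeaPlus (h : ℝ) (σ : Config L) : Prop := SeaHom h (plusC L) σ
def SeaChessAny (h : ℝ) (σ : Config L) : Prop :=
  SeaChess h (chessE L) σ ∨ SeaChess h (chessO L) σ

/-- Communication height `H(σ,η) = H(σ) - log P(σ,η)`. -/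
def commH (β h : ℝ) [NeZero L] (σ η : Config L) : ℝ :=
  Ham β h σ - Real.log (Pmat β h σ η)

/-- Minimal height (minmax) `Φ(σ,η)` over all paths from `σ` to `η`. -/
def Phi (β h : ℝ) [NeZero L] (σ η : Config L) : ℝ :=
  sInf { v | ∃ (n : ℕ) (f : ℕ → Config L), 0 < n ∧ f 0 = σ ∧ f n = η ∧
    v = sSup { w | ∃ i < n, w = commH β h (f i) (f (i + 1)) } }

/-- The barrier `Υ(η) = min_{ζ ∉ 𝔅(η)} Φ(η,ζ)` to exit the basin of the trap `η`. -/
def Ups (β h : ℝ) [NeZero L] (η : Config L) : ℝ :=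
  sInf { v | ∃ ζ : Config L, ζ ∉ basin h η ∧ v = Phi β h η ζ }

/-- Probability, starting from `σ0`, that the first visit to `E` happens
at time `n` and at a state of `F`. -/
def firstHitP (β h : ℝ) [NeZero L] (σ0 : Config L) (E F : Set (Config L)) (n : ℕ) : ℝ :=
  ∑ f : Fin (n + 1) → Config L,
    if f 0 = σ0 ∧ (∀ i : Fin (n + 1), (i : ℕ) < n → f i ∉ E) ∧ f (Fin.last n) ∈ E ∩ F
    then ∏ i : Fin n, Pmat β h (f i.castSucc) (f i.succ) else 0

/-- `ℙ_{σ0}(τ_A < τ_B)`. -/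
def probHitBefore (β h : ℝ) [NeZero L] (σ0 : Config L) (A B : Set (Config L)) : ℝ :=
  ∑' n : ℕ, firstHitP β h σ0 (A ∪ B) (A \ B) n

/-- `ℙ_{σ0}(τ_D ∈ I)` (for `τ_D < ∞`). -/
def probTauIn (β h : ℝ) [NeZero L] (σ0 : Config L) (D : Set (Config L)) (I : Set ℝ) : ℝ :=
  ∑' n : ℕ, if (n : ℝ) ∈ I then firstHitP β h σ0 D Set.univ n else 0

/-- `ℙ_{σ0}(τ_D > t)` (including the event that `D` is never visited). -/
def probTauGT (β h : ℝ) [NeZero L] (σ0 : Config L) (D : Set (Config L)) (t : ℝ) : ℝ :=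
  1 - probTauIn β h σ0 D (Set.Iic t)

/-- `ℙ_{σ0}(σ_{τ_E} ∈ F)`. -/
def probFirstHitIn (β h : ℝ) [NeZero L] (σ0 : Config L) (E F : Set (Config L)) : ℝ :=
  ∑' n : ℕ, firstHitP β h σ0 E F n

/-- The critical length `λ = ⌊2/h⌋ + 1`. -/
def lam (h : ℝ) : ℕ := Nat.floor (2 / h) + 1

/-- The protocritical height `Γ = -2hλ² + 2λ(4+h) - 2h`. -/
def Gam (h : ℝ) : ℝ :=
  -2 * h * (lam h : ℝ) ^ 2 + 2 * (lam h : ℝ) * (4 + h) - 2 * h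

/-- The geometric conditions of Proposition 3.3 (iii) for a trap in the sea of
minuses, with `s` chessboard rectangles (indices `< s`) and `k - s` plus
rectangles (indices `≥ s`). -/
def MinusMultiSpec (h : ℝ) (σ : Config L) (s : ℕ) {k : ℕ}
    (c : Fin k → Site L) (a b : Fin k → ℕ) : Prop :=
  1 ≤ k ∧ s ≤ k ∧
  (∀ i, 2 ≤ min (a i) (b i) ∧ max (a i) (b i) ≤ L - 2) ∧
  (∀ i j, i ≠ j → Disjoint (rect (c i) (a i) (b i)) (rect (c j) (a j) (b j))) ∧
  (∀ j i : Fin k, (j : ℕ) < s → s ≤ (i : ℕ) →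
    NonInteracting (rect (c j) (a j) (b j)) (rect (c i) (a i) (b i))) ∧
  (∀ i j : Fin k, s ≤ (i : ℕ) → s ≤ (j : ℕ) → i ≠ j →
    NonInteracting (rect (c i) (a i) (b i)) (rect (c j) (a j) (b j))) ∧
  (∀ x, (∀ i, x ∉ rect (c i) (a i) (b i)) → σ x = false) ∧
  (∀ i : Fin k, s ≤ (i : ℕ) → ∀ x ∈ rect (c i) (a i) (b i), σ x = true) ∧
  ∃ Cp : Fin k → Config L,
    (∀ j : Fin k, (j : ℕ) < s → IsChessCfg (Cp j) ∧
      ∃ (k' : ℕ) (c' : Fin k' → Site L) (a' b' : Fin k' → ℕ),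
        (∀ i, rect (c' i) (a' i) (b' i) ⊆ rect (c j) (a j) (b j)) ∧
        (∀ i i', i ≠ i' →
          NonInteracting (rect (c' i) (a' i) (b' i)) (rect (c' i') (a' i') (b' i'))) ∧
        (∀ i, ∀ x ∈ rect (c' i) (a' i) (b' i), σ x = true) ∧
        (∀ x ∈ rect (c j) (a j) (b j),
          (∀ i, x ∉ rect (c' i) (a' i) (b' i)) → σ x = Cp j x)) ∧
    (∀ i j : Fin k, (i : ℕ) < s → (j : ℕ) < s → i ≠ j → Cp i = Cp j →
      NonInteracting (rect (c i) (a i) (b i)) (rect (c j) (a j) (b j)))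

/-- `η ∈ 𝒪_{-1}` (a `(λ-1) × λ` chessboard droplet in the sea of minuses) and
`ζ ∈ π_{-1}(η)` is one of its protocritical droplets. -/
def ProtoRel (h : ℝ) (η ζ : Config L) : Prop :=
  ∃ (c : Site L) (a b : ℕ) (C : Config L) (y z : Site L),
    IsChessCfg C ∧
    ((a = lam h - 1 ∧ b = lam h) ∨ (a = lam h ∧ b = lam h - 1)) ∧
    (∀ x ∈ rect c a b, η x = C x) ∧ (∀ x ∉ rect c a b, η x = false) ∧
    y ∉ rect c a b ∧ z ∈ rect c a b ∧ Adj y z ∧ C z = true ∧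
    (∀ x ∈ rect c a b, ζ x = !(C x)) ∧ ζ y = true ∧
    (∀ x, x ∉ rect c a b → x ≠ y → ζ x = false)

/-- The set `𝒪_{-1}` of `(λ-1) × λ` chessboard droplets in the sea of minuses. -/
def OSet (h : ℝ) (L : ℕ) : Set (Config L) :=
  { η | ∃ (c : Site L) (a b : ℕ) (C : Config L),
      IsChessCfg C ∧ ((a = lam h - 1 ∧ b = lam h) ∨ (a = lam h ∧ b = lam h - 1)) ∧
      (∀ x ∈ rect c a b, η x = C x) ∧ (∀ x ∉ rect c a b, η x = false) }

/-- The set `𝒫_{-1}` of protocritical droplets. -/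
def ProtoSet (h : ℝ) (L : ℕ) : Set (Config L) := { ζ | ∃ η, ProtoRel h η ζ }

end

/-! Goles–Olivos: the pair energy `Q(σ, η) = -∑ₓ η(x) (S_σ(x) + h) - h ∑ₓ σ(x)` is symmetric, and
for fixed `σ` it is minimised exactly at `η = Tσ` because `S_σ(x) + h` never vanishes. Hence
`V(σ) = Q(σ, Tσ)` satisfies `V(Tσ) = Q(Tσ, T²σ) ≤ Q(Tσ, σ) = V(σ)`, strictly unless `T²σ = σ`,
so along a periodic orbit `V` is constant and every point has period at most two. -/

theorem _root_.Function.IsPeriodicPt.apply_apply_eq_of_lyapunov {α β : Type*} [Preorder β]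
    {f : α → α} (V : α → β) (hle : ∀ x, V (f x) ≤ V x)
    (hlt : ∀ x, f (f x) ≠ x → V (f x) < V x) {n : ℕ} {x : α} (hn : 0 < n)
    (hx : Function.IsPeriodicPt f n x) : f (f x) = x := by
  by_contra hne
  have hanti : Antitone fun m => V (f^[m] x) := antitone_nat_of_succ_le fun m => by
    simpa only [Function.iterate_succ_apply'] using hle _
  have hxle : V x ≤ V (f x) := by
    simpa only [hx.eq, Function.iterate_one] using hanti (Nat.one_le_iff_ne_zero.2 hn.ne')
  exact lt_irrefl _ (hxle.trans_lt (hlt x hne))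

theorem eq_iterate_of_forall_succ_eq {α : Type*} {f : α → α} {n : ℕ} {σ : ℕ → α}
    (hstep : ∀ i, i + 1 < n → σ (i + 1) = f (σ i)) : ∀ i < n, σ i = f^[i] (σ 0)
  | 0, _ => rfl
  | i + 1, hi => by
    rw [hstep i hi, eq_iterate_of_forall_succ_eq hstep i (by omega),
      Function.iterate_succ_apply']

theorem Fintype.sum_mul_add_shift_comm {G : Type*} [AddCommGroup G] [Fintype G]
    (f g : G → ℝ) (e : G) :
    ∑ x, f x * g (x + e) + ∑ x, f x * g (x - e) =
      ∑ x, g x * f (x + e) + ∑ x, g x * f (x - e) := by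
  have hplus : ∑ x, f x * g (x + e) = ∑ x, g x * f (x - e) :=
    Fintype.sum_equiv (Equiv.addRight e) _ _ fun x => by simp [mul_comm]
  have hminus : ∑ x, f x * g (x - e) = ∑ x, g x * f (x + e) :=
    Fintype.sum_equiv (Equiv.subRight e) _ _ fun x => by simp [mul_comm]
  rw [hplus, hminus, add_comm]

theorem spin_mul_le_abs (a : Bool) (c : ℝ) : spin a * c ≤ |c| := by
  cases a
  · simpa [spin] using neg_le_abs c
  · simpa [spin] using le_abs_self c

theorem spin_decide_pos_mul (c : ℝ) : spin (if 0 < c then true else false) * c = |c| := by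
  by_cases hc : 0 < c
  · simp [spin, hc, abs_of_pos hc]
  · simp [spin, hc, abs_of_nonpos (not_lt.1 hc)]

theorem spin_mul_lt_abs {c : ℝ} (hc : c ≠ 0) {a : Bool}
    (ha : a ≠ if 0 < c then true else false) : spin a * c < |c| := by
  rcases hc.lt_or_gt with hneg | hpos
  · obtain rfl : a = true := by simpa [not_lt.2 hneg.le] using ha
    simp only [spin, if_true, abs_of_neg hneg]
    linarith
  · obtain rfl : a = false := by simpa [hpos] using ha
    simp only [spin, Bool.false_eq_true, if_false, abs_of_pos hpos]
    linarith

variable {L : ℕ}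

theorem nnS_add_ne_zero {h : ℝ} (h0 : 0 < h) (h2 : h < 2) (σ : Config L) (x : Site L) :
    nnS σ x + h ≠ 0 := by
  have hspin (b : Bool) : spin b = 1 ∨ spin b = -1 := by cases b <;> simp [spin]
  unfold nnS
  rcases hspin (σ (x + east L)) with h1 | h1 <;> rcases hspin (σ (x - east L)) with h3 | h3 <;>
    rcases hspin (σ (x + north L)) with h4 | h4 <;> rcases hspin (σ (x - north L)) with h5 | h5 <;>
    rw [h1, h3, h4, h5] <;> intro hzero <;> linarith

theorem sum_spin_mul_nnS_comm [NeZero L] (σ η : Config L) :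
    ∑ x, spin (η x) * nnS σ x = ∑ x, spin (σ x) * nnS η x := by
  have hsplit (τ : Config L) (x : Site L) : nnS τ x =
      (spin (τ (x + east L)) + spin (τ (x - east L))) +
        (spin (τ (x + north L)) + spin (τ (x - north L))) := by
    rw [nnS, ← add_assoc]
  simp only [hsplit, mul_add, Finset.sum_add_distrib]
  rw [Fintype.sum_mul_add_shift_comm (fun x => spin (η x)) (fun x => spin (σ x)),
    Fintype.sum_mul_add_shift_comm (fun x => spin (η x)) (fun x => spin (σ x))]

noncomputable def pairEnergy [NeZero L] (h : ℝ) (σ η : Config L) : ℝ :=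
  -∑ x, spin (η x) * (nnS σ x + h) - h * ∑ x, spin (σ x)

theorem pairEnergy_comm [NeZero L] (h : ℝ) (σ η : Config L) :
    pairEnergy h σ η = pairEnergy h η σ := by
  simp only [pairEnergy, mul_add, Finset.sum_add_distrib, ← Finset.sum_mul,
    sum_spin_mul_nnS_comm σ η]
  ring

theorem pairEnergy_T_le [NeZero L] (h : ℝ) (σ η : Config L) :
    pairEnergy h σ (T h σ) ≤ pairEnergy h σ η := by
  have hsum : ∑ x, spin (η x) * (nnS σ x + h) ≤ ∑ x, spin (T h σ x) * (nnS σ x + h) :=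
    Finset.sum_le_sum fun x _ => (spin_mul_le_abs _ _).trans (spin_decide_pos_mul _).ge
  simp only [pairEnergy]
  linarith

theorem pairEnergy_T_lt [NeZero L] {h : ℝ} (h0 : 0 < h) (h2 : h < 2) {σ η : Config L}
    (hη : η ≠ T h σ) : pairEnergy h σ (T h σ) < pairEnergy h σ η := by
  obtain ⟨x₀, hx₀⟩ := Function.ne_iff.1 hη
  have hsum : ∑ x, spin (η x) * (nnS σ x + h) < ∑ x, spin (T h σ x) * (nnS σ x + h) :=
    Finset.sum_lt_sum
      (fun x _ => (spin_mul_le_abs _ _).trans (spin_decide_pos_mul _).ge)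
      ⟨x₀, Finset.mem_univ _,
        (spin_mul_lt_abs (nnS_add_ne_zero h0 h2 σ x₀) hx₀).trans_eq (spin_decide_pos_mul _).symm⟩
  simp only [pairEnergy]
  linarith

theorem T_T_eq_of_isPeriodicPt [NeZero L] {h : ℝ} (h0 : 0 < h) (h2 : h < 2) {n : ℕ}
    (hn : 0 < n) {σ : Config L} (hσ : Function.IsPeriodicPt (T h) n σ) : T h (T h σ) = σ :=
  hσ.apply_apply_eq_of_lyapunov (fun τ => pairEnergy h τ (T h τ))
    (fun τ => (pairEnergy_T_le h _ τ).trans_eq (pairEnergy_comm h _ _))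
    (fun _ hτ => (pairEnergy_T_lt h0 h2 hτ.symm).trans_eq (pairEnergy_comm h _ _)) hn

/-- the zero-temperature dynamics has no cycles of length
greater than two. -/
theorem no_long_cycles (L : ℕ) [NeZero L] (h : ℝ) (h0 : 0 < h) (h2 : h < 2) :
    ¬ ∃ (n : ℕ) (σ : ℕ → Config L), 3 ≤ n ∧
      (∀ i j, i < n → j < n → i ≠ j → σ i ≠ σ j) ∧
      (∀ i, i + 1 < n → σ (i + 1) = T h (σ i)) ∧
      σ 0 = T h (σ (n - 1)) := by
  rintro ⟨n, σ, hn, hdist, hstep, hcyc⟩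
  have horbit := eq_iterate_of_forall_succ_eq hstep
  have hperiodic : Function.IsPeriodicPt (T h) n (σ 0) := by
    have hsucc : n = (n - 1) + 1 := by omega
    show (T h)^[n] (σ 0) = σ 0
    rw [hsucc, Function.iterate_succ_apply', ← horbit (n - 1) (by omega), hcyc]
  refine hdist 2 0 (by omega) (by omega) two_ne_zero ?_
  rw [horbit 2 (by omega)]
  exact T_T_eq_of_isPeriodicPt h0 h2 (by omega) hperiodic

end PCA
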